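/- Suppose all the MPC setup assumptions hold (including the controllability assumption with constants b, ε > 0 and σ > 1, convexity of V_o with V_o(0) = 0, Lipschitz continuity of g_p, and the class-K∞ lower bound α_ℓ on ℓ). Along the MPC closed loop, denote by (u*_k, x*_k, s*_k) an optimal feasible tuple at x_k with artificial steady state x_{s_k}* = g_p(s*_k). If s*_k converges to some s_∞ ∈ [0,1] and ‖x_k − x_{s_k}*‖ → 0 as k → ∞, then s_∞ = 1. -/

import Mathlib

/-!
If the path parameter converged to some `s∞ < 1` while the state approached the artificial
steady state, then at a late time `k` one could advance the parameter from `s*_k` to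
`s*_k + δ`: the new steady state is within `2 L δ` of `x_k`, so controllability yields a
feasible tuple whose tracking cost is `O(δ^σ)`, while convexity of `V_o` with `V_o(0) = 0`
lowers the offset cost by at least `δ V_o(1 - s*_k) ≥ δ α_o((1 - s∞)/2)`. Since `σ > 1`, the
gain beats the cost for small `δ`, contradicting optimality.
-/

open Filter Topology

noncomputable section

/-- A class-`K` function: continuous on `[0,∞)`, strictly increasing there, vanishing at `0`. -/
def IsClassK (α : ℝ → ℝ) : Prop :=
  ContinuousOn α (Set.Ici 0) ∧ StrictMonoOn α (Set.Ici 0) ∧ α 0 = 0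

/-- A class-`K∞` function: class `K` and unbounded. -/
def IsClassKInfty (α : ℝ → ℝ) : Prop :=
  IsClassK α ∧ Filter.Tendsto α Filter.atTop Filter.atTop

/-- The data of the output-tracking MPC problem for motion planning:
dynamics `f`, constraint set `Z`, `No` obstacles `O i`, footprint `B`,
reference path `p`, output map `g`, steady-state path `gp` with steady inputs `us`,
stage cost `sc` (called `ℓ` in the paper), offset cost `Vo`, and horizon `N`. -/
structure MPC (n m q : ℕ) where
  f : EuclideanSpace ℝ (Fin n) → EuclideanSpace ℝ (Fin m) → EuclideanSpace ℝ (Fin n)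
  Z : Set (EuclideanSpace ℝ (Fin n) × EuclideanSpace ℝ (Fin m))
  No : ℕ
  O : ℕ → Set (EuclideanSpace ℝ (Fin 2))
  B : EuclideanSpace ℝ (Fin n) → Set (EuclideanSpace ℝ (Fin 2))
  p : ℝ → EuclideanSpace ℝ (Fin q)
  g : EuclideanSpace ℝ (Fin n) → EuclideanSpace ℝ (Fin q)
  gp : ℝ → EuclideanSpace ℝ (Fin n)
  us : ℝ → EuclideanSpace ℝ (Fin m)
  sc : EuclideanSpace ℝ (Fin n) → EuclideanSpace ℝ (Fin m) → ℝ
  Vo : ℝ → ℝ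
  N : ℕ

namespace MPC

variable {n m q : ℕ} (M : MPC n m q)

/-- A tuple `(u_{0:N}, x_{0:N}, s)` is feasible at state `x` for problem (7):
`x_{0|k} = x`, the dynamics hold along the prediction, the terminal pair is a steady
state whose output lies on the path at `s ∈ [0,1]`, the state/input constraints hold, and
the predicted states `l = 1,…,N` are collision-free. -/
def Feasible (x : EuclideanSpace ℝ (Fin n)) (u : ℕ → EuclideanSpace ℝ (Fin m))
    (xs : ℕ → EuclideanSpace ℝ (Fin n)) (s : ℝ) : Prop :=
  s ∈ Set.Icc (0 : ℝ) 1 ∧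
  xs 0 = x ∧
  (∀ l < M.N, xs (l + 1) = M.f (xs l) (u l)) ∧
  xs M.N = M.f (xs M.N) (u M.N) ∧
  M.g (xs M.N) = M.p s ∧
  (∀ l ≤ M.N, (xs l, u l) ∈ M.Z) ∧
  (∀ l, 1 ≤ l → l ≤ M.N → ∀ i < M.No, M.B (xs l) ∩ M.O i = ∅)

/-- The MPC cost `J_N(u, x, s) = Σ_{l=0}^{N-1} ℓ(x_l − x_N, u_l − u_N) + V_o(1 − s)`. -/
def Cost (u : ℕ → EuclideanSpace ℝ (Fin m)) (xs : ℕ → EuclideanSpace ℝ (Fin n)) (s : ℝ) : ℝ :=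
  (∑ l ∈ Finset.range M.N, M.sc (xs l - xs M.N) (u l - u M.N)) + M.Vo (1 - s)

/-- `(u, xs, s)` is an optimal feasible tuple at `x`; its cost is the optimal value `V_N(x)`. -/
def IsOptimal (x : EuclideanSpace ℝ (Fin n)) (u : ℕ → EuclideanSpace ℝ (Fin m))
    (xs : ℕ → EuclideanSpace ℝ (Fin n)) (s : ℝ) : Prop :=
  M.Feasible x u xs s ∧
  ∀ u' xs' s', M.Feasible x u' xs' s' → M.Cost u xs s ≤ M.Cost u' xs' s'

/-- Assumption 1 items 2–4 on the path and steady states: `g ∘ gp = p` on `[0,1]`, each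
`(gp s, us s)` is a steady state in the interior of `Z` whose footprint avoids all
obstacles, and it is the unique steady state with output `p s`. -/
def SteadyStatePath : Prop :=
  (∀ s ∈ Set.Icc (0 : ℝ) 1, M.g (M.gp s) = M.p s) ∧
  (∀ s ∈ Set.Icc (0 : ℝ) 1, M.f (M.gp s) (M.us s) = M.gp s) ∧
  (∀ s ∈ Set.Icc (0 : ℝ) 1, (M.gp s, M.us s) ∈ interior M.Z) ∧
  (∀ s ∈ Set.Icc (0 : ℝ) 1, ∀ i < M.No, M.B (M.gp s) ∩ M.O i = ∅) ∧
  (∀ s ∈ Set.Icc (0 : ℝ) 1, ∀ xss uss, M.f xss uss = xss → M.g xss = M.p s →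
      xss = M.gp s ∧ uss = M.us s)

/-- Assumption 3 (controllability): from any state `ε`-close to a steady state on the path
there is a feasible tuple whose tracking cost is bounded by `b‖x − gp s‖^σ`. -/
def Controllable (b ε σ : ℝ) : Prop :=
  ∀ s ∈ Set.Icc (0 : ℝ) 1, ∀ x : EuclideanSpace ℝ (Fin n), ‖x - M.gp s‖ ≤ ε →
    ∃ u xs, M.Feasible x u xs s ∧
      (∑ l ∈ Finset.range M.N, M.sc (xs l - M.gp s) (u l - M.us s)) ≤ b * ‖x - M.gp s‖ ^ σ

end MPC

open Set

theorem exists_pos_le_and_mul_rpow_lt {A σ r : ℝ} (K : ℝ) (hA : 0 < A) (hσ : 1 < σ) (hr : 0 < r) :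
    ∃ δ, 0 < δ ∧ δ ≤ r ∧ K * δ ^ σ < A * δ := by
  have hlim : Tendsto (fun δ : ℝ => K * δ ^ (σ - 1)) (𝓝[>] 0) (𝓝 0) := by
    have hcont : ContinuousAt (fun δ : ℝ => K * δ ^ (σ - 1)) 0 :=
      continuousAt_const.mul (Real.continuousAt_rpow_const _ _ (Or.inr (by linarith)))
    simpa [Real.zero_rpow (by linarith : σ - 1 ≠ 0)] using
      hcont.tendsto.mono_left nhdsWithin_le_nhds
  obtain ⟨δ, hlt, (hpos : 0 < δ), hle⟩ := ((hlim.eventually_lt_const hA).and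
    (eventually_mem_nhdsWithin.and ((eventually_le_nhds hr).filter_mono nhdsWithin_le_nhds))).exists
  refine ⟨δ, hpos, hle, ?_⟩
  calc K * δ ^ σ = K * δ ^ (σ - 1) * δ := by
        rw [mul_assoc, ← Real.rpow_add_one hpos.ne', sub_add_cancel]
    _ < A * δ := mul_lt_mul_of_pos_right hlt hpos

theorem ConvexOn.map_smul_le_of_map_zero {E : Type*} [AddCommGroup E] [Module ℝ E] {s : Set E}
    {V : E → ℝ} (hV : ConvexOn ℝ s V) (h0 : (0 : E) ∈ s) (hV0 : V 0 = 0) {x : E} (hx : x ∈ s)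
    {θ : ℝ} (hθ0 : 0 ≤ θ) (hθ1 : θ ≤ 1) : V (θ • x) ≤ θ * V x := by
  simpa [hV0] using hV.2 hx h0 hθ0 (sub_nonneg.2 hθ1) (add_sub_cancel θ 1)

theorem IsClassK.pos {α : ℝ → ℝ} (hα : IsClassK α) {r : ℝ} (hr : 0 < r) : 0 < α r := by
  simpa [hα.2.2] using hα.2.1 self_mem_Ici hr.le hr

namespace MPC

variable {n m q : ℕ} (M : MPC n m q) {x : EuclideanSpace ℝ (Fin n)}
  {u : ℕ → EuclideanSpace ℝ (Fin m)} {xs : ℕ → EuclideanSpace ℝ (Fin n)} {s b ε σ : ℝ}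

theorem Vo_le_cost (hsc : ∀ x u, 0 ≤ M.sc x u) (u : ℕ → EuclideanSpace ℝ (Fin m))
    (xs : ℕ → EuclideanSpace ℝ (Fin n)) (s : ℝ) : M.Vo (1 - s) ≤ M.Cost u xs s :=
  le_add_of_nonneg_left (Finset.sum_nonneg fun _ _ => hsc _ _)

variable {M}

theorem SteadyStatePath.terminal_eq (hpath : M.SteadyStatePath) (h : M.Feasible x u xs s) :
    xs M.N = M.gp s ∧ u M.N = M.us s :=
  hpath.2.2.2.2 s h.1 _ _ h.2.2.2.1.symm h.2.2.2.2.1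

theorem Controllable.exists_feasible_cost_le (hctrl : M.Controllable b ε σ)
    (hpath : M.SteadyStatePath) (hs : s ∈ Icc (0 : ℝ) 1) (hx : ‖x - M.gp s‖ ≤ ε) :
    ∃ u xs, M.Feasible x u xs s ∧ M.Cost u xs s ≤ b * ‖x - M.gp s‖ ^ σ + M.Vo (1 - s) := by
  obtain ⟨u, xs, hfeas, hsum⟩ := hctrl s hs x hx
  obtain ⟨hxN, huN⟩ := hpath.terminal_eq hfeas
  refine ⟨u, xs, hfeas, ?_⟩
  rw [Cost, hxN, huN]
  exact add_le_add_left hsum _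

theorem IsOptimal.Vo_le (hopt : M.IsOptimal x u xs s) (hsc : ∀ x u, 0 ≤ M.sc x u)
    (hpath : M.SteadyStatePath) (hctrl : M.Controllable b ε σ) {s' : ℝ}
    (hs' : s' ∈ Icc (0 : ℝ) 1) (hx : ‖x - M.gp s'‖ ≤ ε) :
    M.Vo (1 - s) ≤ b * ‖x - M.gp s'‖ ^ σ + M.Vo (1 - s') := by
  obtain ⟨u', xs', hfeas, hcost⟩ := hctrl.exists_feasible_cost_le hpath hs' hx
  exact (M.Vo_le_cost hsc u xs s).trans ((hopt.2 u' xs' s' hfeas).trans hcost)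

theorem IsOptimal.div_mul_Vo_le (hopt : M.IsOptimal x u xs s) (hsc : ∀ x u, 0 ≤ M.sc x u)
    (hpath : M.SteadyStatePath) (hctrl : M.Controllable b ε σ)
    (hVoConv : ConvexOn ℝ (Icc 0 1) M.Vo) (hVo0 : M.Vo 0 = 0) (hb : 0 ≤ b) (hσ : 0 ≤ σ)
    {L : ℝ} (hgpLip : ∀ s ∈ Icc (0 : ℝ) 1, ∀ t ∈ Icc (0 : ℝ) 1, ‖M.gp s - M.gp t‖ ≤ L * |s - t|)
    {δ : ℝ} (hδ : 0 < δ) (hsδ : s + δ ≤ 1) (hx : ‖x - M.gp s‖ ≤ L * δ) (hLε : 2 * L * δ ≤ ε) :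
    δ / (1 - s) * M.Vo (1 - s) ≤ b * (2 * L * δ) ^ σ := by
  have hs : s ∈ Icc (0 : ℝ) 1 := hopt.1.1
  have ht : 0 < 1 - s := by linarith
  have hs' : s + δ ∈ Icc (0 : ℝ) 1 := ⟨by linarith [hs.1], hsδ⟩
  have hdist : ‖x - M.gp (s + δ)‖ ≤ 2 * L * δ := calc
    ‖x - M.gp (s + δ)‖ ≤ ‖x - M.gp s‖ + ‖M.gp s - M.gp (s + δ)‖ :=
        norm_sub_le_norm_sub_add_norm_sub _ _ _
    _ ≤ L * δ + L * |s - (s + δ)| := add_le_add hx (hgpLip _ hs _ hs')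
    _ = 2 * L * δ := by rw [sub_add_cancel_left, abs_neg, abs_of_pos hδ]; ring
  have hdecrease : M.Vo (1 - (s + δ)) ≤ (1 - δ / (1 - s)) * M.Vo (1 - s) := by
    have hθ : δ / (1 - s) ≤ 1 := (div_le_one ht).2 (by linarith)
    convert hVoConv.map_smul_le_of_map_zero ⟨le_rfl, zero_le_one⟩ hVo0
      ⟨ht.le, by linarith [hs.1]⟩ (sub_nonneg.2 hθ) (sub_le_self _ (by positivity)) using 2
    rw [smul_eq_mul]
    field_simp
    ring
  have hcandidate : b * ‖x - M.gp (s + δ)‖ ^ σ ≤ b * (2 * L * δ) ^ σ :=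
    mul_le_mul_of_nonneg_left (Real.rpow_le_rpow (norm_nonneg _) hdist hσ) hb
  linarith [hopt.Vo_le hsc hpath hctrl hs' (hdist.trans hLε)]

end MPC

theorem mpc_lemma2_path_parameter_converges_to_one_general
    {n m q : ℕ} (M : MPC n m q)
    (hpath : M.SteadyStatePath)
    (Lgp : ℝ) (hLgp : 0 < Lgp)
    (hgpLip : ∀ s ∈ Set.Icc (0 : ℝ) 1, ∀ t ∈ Set.Icc (0 : ℝ) 1,
      ‖M.gp s - M.gp t‖ ≤ Lgp * |s - t|)
    (hscNonneg : ∀ x u, 0 ≤ M.sc x u)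
    (hVoConv : ConvexOn ℝ (Set.Icc 0 1) M.Vo)
    (hVo0 : M.Vo 0 = 0)
    (αo : ℝ → ℝ) (hαo : IsClassK αo)
    (hVolb : ∀ s ∈ Set.Icc (0 : ℝ) 1, αo |1 - s| ≤ M.Vo (1 - s))
    (b ε σ : ℝ) (hb : 0 < b) (hε : 0 < ε) (hσ : 1 < σ)
    (hctrl : M.Controllable b ε σ)
    (x : ℕ → EuclideanSpace ℝ (Fin n))
    (uu : ℕ → ℕ → EuclideanSpace ℝ (Fin m))
    (xx : ℕ → ℕ → EuclideanSpace ℝ (Fin n)) (ss : ℕ → ℝ)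
    (hopt : ∀ k, M.IsOptimal (x k) (uu k) (xx k) (ss k))
    (sinf : ℝ) (hsinf : sinf ∈ Set.Icc (0 : ℝ) 1)
    (hsconv : Filter.Tendsto ss Filter.atTop (nhds sinf))
    (hxconv : Filter.Tendsto (fun k => ‖x k - M.gp (ss k)‖) Filter.atTop (nhds 0)) :
    sinf = 1 := by
  by_contra hne
  have hs1 : sinf < 1 := hsinf.2.lt_of_ne hne
  set c := (1 - sinf) / 2 with hc_def
  have hc : 0 < c := by linarith
  have hA : 0 < αo c := hαo.pos hc
  obtain ⟨δ, hδ, hδr, hδsmall⟩ := exists_pos_le_and_mul_rpow_lt (b * (2 * Lgp) ^ σ) hA hσ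
    (lt_min hc (div_pos hε (by positivity : 0 < 2 * Lgp)))
  have hδc : δ ≤ c := hδr.trans (min_le_left _ _)
  have hδε : 2 * Lgp * δ ≤ ε := by
    have := hδr.trans (min_le_right _ _)
    rw [le_div_iff₀ (by positivity)] at this
    linarith
  obtain ⟨k, hk_s, hk_x⟩ := ((hsconv.eventually_lt_const (by linarith : sinf < sinf + c)).and
    (hxconv.eventually_lt_const (by positivity : (0 : ℝ) < Lgp * δ))).exists
  have hs := (hopt k).1.1
  have hct : c < 1 - ss k := by linarith
  have hbound := (hopt k).div_mul_Vo_le hscNonneg hpath hctrl hVoConv hVo0 hb.le (by linarith)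
    hgpLip hδ (by linarith) hk_x.le hδε
  have hαVo : αo c ≤ M.Vo (1 - ss k) := by
    refine (hαo.2.1.monotoneOn hc.le (hc.trans hct).le hct.le).trans ?_
    simpa [abs_of_pos (hc.trans hct)] using hVolb (ss k) hs
  have hδ_le : δ ≤ δ / (1 - ss k) := le_div_self hδ.le (by linarith) (by linarith [hs.1])
  have hcontra : δ * αo c ≤ b * (2 * Lgp) ^ σ * δ ^ σ := calc
    δ * αo c ≤ δ / (1 - ss k) * M.Vo (1 - ss k) :=
        mul_le_mul hδ_le hαVo hA.le (hδ.le.trans hδ_le)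
    _ ≤ b * (2 * Lgp * δ) ^ σ := hbound
    _ = b * (2 * Lgp) ^ σ * δ ^ σ := by rw [Real.mul_rpow (by positivity) hδ.le]; ring
  linarith

/-- **Lemma 2.** Under the MPC setup assumptions (controllability with `b, ε > 0`, `σ > 1`,
convex `V_o` with `V_o 0 = 0`, Lipschitz `g_p`, class-`K∞` lower bound `α_ℓ` on the stage
cost, and class-`K` lower bound `α_o` on the offset cost), along the MPC closed loop with
optimal feasible tuples `(u* k, x* k, s* k)` and artificial steady state `gp (s* k)`:
if `s* k → s∞ ∈ [0,1]` and `‖x k − gp (s* k)‖ → 0`, then `s∞ = 1`. -/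
theorem mpc_lemma2_path_parameter_converges_to_one
    {n m q : ℕ} (M : MPC n m q)
    (hpath : M.SteadyStatePath)
    (Lgp : ℝ) (hLgp : 0 < Lgp)
    (hgpLip : ∀ s ∈ Set.Icc (0 : ℝ) 1, ∀ t ∈ Set.Icc (0 : ℝ) 1,
      ‖M.gp s - M.gp t‖ ≤ Lgp * |s - t|)
    (hscNonneg : ∀ x u, 0 ≤ M.sc x u)
    (hVoConv : ConvexOn ℝ (Set.Icc 0 1) M.Vo)
    (hVo0 : M.Vo 0 = 0)
    (hVoNonneg : ∀ t ∈ Set.Icc (0 : ℝ) 1, 0 ≤ M.Vo t)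
    (αℓ αo : ℝ → ℝ) (hαℓ : IsClassKInfty αℓ) (hαo : IsClassK αo)
    (hsclb : ∀ x u, αℓ ‖x‖ ≤ M.sc x u)
    (hVolb : ∀ s ∈ Set.Icc (0 : ℝ) 1, αo |1 - s| ≤ M.Vo (1 - s))
    (b ε σ : ℝ) (hb : 0 < b) (hε : 0 < ε) (hσ : 1 < σ)
    (hctrl : M.Controllable b ε σ)
    (x : ℕ → EuclideanSpace ℝ (Fin n))
    (uu : ℕ → ℕ → EuclideanSpace ℝ (Fin m))
    (xx : ℕ → ℕ → EuclideanSpace ℝ (Fin n)) (ss : ℕ → ℝ)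
    (hopt : ∀ k, M.IsOptimal (x k) (uu k) (xx k) (ss k))
    (hstep : ∀ k, x (k + 1) = M.f (x k) (uu k 0))
    (sinf : ℝ) (hsinf : sinf ∈ Set.Icc (0 : ℝ) 1)
    (hsconv : Filter.Tendsto ss Filter.atTop (nhds sinf))
    (hxconv : Filter.Tendsto (fun k => ‖x k - M.gp (ss k)‖) Filter.atTop (nhds 0)) :
    sinf = 1 :=
  mpc_lemma2_path_parameter_converges_to_one_general M hpath Lgp hLgp hgpLip hscNonneg hVoConv hVo0
    αo hαo hVolb b ε σ hb hε hσ hctrl x uu xx ss hopt sinf hsinf hsconv hxconv
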